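/- Let w ∼ w' ∈ Σⁿ be neighboring strings compressed by LZ77 with unbounded sliding window (W = n). Then the number t₂ of type-2 blocks among the blocks of Compress(w) satisfies t₂ ≤ (∛9/2)·n^{2/3} + (∛3/2)·n^{1/3} + 1. -/

import Mathlib

/-- A single LZ77 block `[q, len, c]`. -/
structure LZBlock (α : Type*) where
  q : ℕ
  len : ℕ
  c : α

/-- `s_i` (1-indexed start position of the `i`-th block, `i` 0-indexed). -/
def blockStart {α : Type*} (B : List (LZBlock α)) (i : ℕ) : ℕ :=
  1 + ((B.take i).map (fun b => b.len + 1)).sum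

/-- `f_i` (1-indexed final position of the `i`-th block, `i` 0-indexed). -/
def blockFin {α : Type*} (B : List (LZBlock α)) (i : ℕ) : ℕ :=
  ((B.take (i + 1)).map (fun b => b.len + 1)).sum

/-- `ℓ_i`, recovered as `f_i - s_i`. -/
def lenAt {α : Type*} (B : List (LZBlock α)) (i : ℕ) : ℕ :=
  blockFin B i - blockStart B i

/-- Non-overlapping LZ77 parse, sliding window `W`, of the length-`n` string `w`
(1-indexed positions). -/
def IsLZ77Parse {α : Type*} (W n : ℕ) (w : ℕ → α) (B : List (LZBlock α)) : Prop :=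
  ((B.map (fun b => b.len + 1)).sum = n) ∧
  ∀ i : Fin B.length,
    ((B.get i).c = w (blockStart B i.1 + (B.get i).len)) ∧
    ((B.get i).len = 0 → (B.get i).q = 0) ∧
    (0 < (B.get i).len →
      1 ≤ (B.get i).q ∧
      blockStart B i.1 ≤ (B.get i).q + W ∧
      (B.get i).q + (B.get i).len ≤ blockStart B i.1 ∧
      ∀ d < (B.get i).len, w ((B.get i).q + d) = w (blockStart B i.1 + d)) ∧
    (blockStart B i.1 + (B.get i).len + 1 ≤ n →
      ¬ ∃ q', 1 ≤ q' ∧ blockStart B i.1 ≤ q' + W ∧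
          q' + (B.get i).len + 1 ≤ blockStart B i.1 ∧
          ∀ d ≤ (B.get i).len, w (q' + d) = w (blockStart B i.1 + d))

/-- LZ77 parse with self-referencing (unbounded window). -/
def IsLZ77SRParse {α : Type*} (n : ℕ) (w : ℕ → α) (B : List (LZBlock α)) : Prop :=
  ((B.map (fun b => b.len + 1)).sum = n) ∧
  ∀ i : Fin B.length,
    ((B.get i).c = w (blockStart B i.1 + (B.get i).len)) ∧
    ((B.get i).len = 0 → (B.get i).q = 0) ∧
    (0 < (B.get i).len →
      1 ≤ (B.get i).q ∧
      (B.get i).q < blockStart B i.1 ∧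
      ∀ d < (B.get i).len, w ((B.get i).q + d) = w (blockStart B i.1 + d)) ∧
    (blockStart B i.1 + (B.get i).len + 1 ≤ n →
      ¬ ∃ q', 1 ≤ q' ∧ q' < blockStart B i.1 ∧
          ∀ d ≤ (B.get i).len, w (q' + d) = w (blockStart B i.1 + d))

/-- `w ∼ w'`: strings of length `n` differing in exactly one position. -/
def Neighbor {α : Type*} (n : ℕ) (w w' : ℕ → α) : Prop :=
  ∃ j, 1 ≤ j ∧ j ≤ n ∧ w j ≠ w' j ∧ ∀ i, i ≠ j → w i = w' i

/-- `M_i`: the set of (0-indexed) blocks of `B'` that start inside block `i` of `B`. -/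
def Mset {α : Type*} (B B' : List (LZBlock α)) (i : ℕ) : Finset ℕ :=
  (Finset.range B'.length).filter
    (fun k => blockStart B i ≤ blockStart B' k ∧ blockStart B' k ≤ blockFin B i)

/-- Indices of type-`m` blocks of `B` (relative to `B'`). -/
def typeSet {α : Type*} (B B' : List (LZBlock α)) (m : ℕ) : Finset ℕ :=
  (Finset.range B.length).filter (fun i => (Mset B B' i).card = m)

/-- Number of bits used to encode each block. -/
def codeLen (n cardS : ℕ) : ℕ :=
  2 * Nat.clog 2 n + Nat.clog 2 cardS

open Finset

/-!
A type-2 block `i` of `w` that avoids the position `j` where `w` and `w'` differ contains a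
whole block `k` of `w'`, final character included, inside its copied part; so that block of `w'`
is a copy of `w[P..P+ℓ'_k]`, where `P` is the matching position in the source of block `i`.
Maximality of block `k` forces `P ≤ j ≤ P + ℓ'_k`, and maximality of the later of two such blocks
of `w'` shows that distinct blocks `i` give distinct pairs `(j - P, P + ℓ'_k - j)`. The pair of
block `i` has weight `ℓ'_k + 2 ≤ ℓ_i + 1`, so the weights add up to at most `n`. As only `v - 1`
pairs have weight `v`, layer-cake counting below `K = ⌊(3n)^{1/3}⌋` shows that at most
`(3n)^{2/3}/2` distinct pairs fit; the single block containing `j` gives the `+ 1`.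
-/

section Counting

lemma card_filter_add_lt_le_choose_two (S : Finset (ℕ × ℕ)) (v : ℕ) :
    #{p ∈ S | p.1 + p.2 < v} ≤ (v + 1).choose 2 := by
  calc #{p ∈ S | p.1 + p.2 < v}
      ≤ #(range v).sym2 := by
        refine card_le_card_of_injOn (fun p => s(p.1, p.1 + p.2)) (fun p hp => ?_) ?_
        · simp only [coe_filter, Set.mem_ofPred_eq] at hp
          simp only [mem_coe, mk_mem_sym2_iff, mem_range]
          omega
        · intro p _ q _ h
          simp only [Sym2.eq_iff] at h
          ext <;> omega
    _ = (v + 1).choose 2 := by rw [card_sym2, card_range]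

lemma sum_range_succ_choose_two (K : ℕ) :
    ∑ v ∈ range K, ((v + 1).choose 2 : ℝ) = (K + 1) * K * (K - 1) / 6 := by
  induction K with
  | zero => simp
  | succ K ih => rw [sum_range_succ, ih, Nat.cast_choose_two]; push_cast; ring

lemma mul_card_le_sum_add_sum_choose_two (S : Finset (ℕ × ℕ)) (K : ℕ) :
    K * #S ≤ ∑ p ∈ S, (p.1 + p.2 + 1) + ∑ v ∈ range K, (v + 1).choose 2 := by
  have layer (u : ℕ) : K ≤ u + 1 + #{v ∈ range K | u < v} := by
    have : Ico (u + 1) K ⊆ {v ∈ range K | u < v} := fun v hv => by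
      simp only [mem_Ico] at hv; simp only [mem_filter, mem_range]; omega
    have := card_le_card this
    rw [Nat.card_Ico] at this
    omega
  calc K * #S = ∑ _p ∈ S, K := by rw [sum_const, smul_eq_mul, mul_comm]
    _ ≤ ∑ p ∈ S, (p.1 + p.2 + 1 + #{v ∈ range K | p.1 + p.2 < v}) :=
        sum_le_sum fun p _ => layer _
    _ = ∑ p ∈ S, (p.1 + p.2 + 1) + ∑ v ∈ range K, #{p ∈ S | p.1 + p.2 < v} := by
        rw [sum_add_distrib]
        congr 1
        exact sum_card_bipartiteAbove_eq_sum_card_bipartiteBelow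
          (r := fun (p : ℕ × ℕ) (v : ℕ) => p.1 + p.2 < v)
    _ ≤ _ := by gcongr with v; exact card_filter_add_lt_le_choose_two S v

lemma card_le_sq_div_two_of_sum_le {S : Finset (ℕ × ℕ)} {n : ℕ}
    (hS : ∑ p ∈ S, (p.1 + p.2 + 2) ≤ n) {x : ℝ} (hx : 0 ≤ x) (hnx : 3 * n ≤ x ^ 3) :
    (#S : ℝ) ≤ x ^ 2 / 2 := by
  set K := ⌊x⌋₊
  have hKx : (K : ℝ) ≤ x := Nat.floor_le hx
  have hxK : x < K + 1 := Nat.lt_floor_add_one x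
  have hlayer : (K : ℝ) * #S + #S ≤ n + (K + 1) * K * (K - 1) / 6 := by
    have h := mul_card_le_sum_add_sum_choose_two S K
    have hsum : ∑ p ∈ S, (p.1 + p.2 + 1) + #S ≤ n := by
      rwa [card_eq_sum_ones, ← sum_add_distrib]
    rw [← sum_range_succ_choose_two]
    exact_mod_cast (by omega : K * #S + #S ≤ n + ∑ v ∈ range K, (v + 1).choose 2)
  have hK2 : (K : ℝ) * (K - 1) ≤ x ^ 2 := by nlinarith
  have : ((K : ℝ) + 1) * #S ≤ ((K : ℝ) + 1) * (x ^ 2 / 2) := by nlinarith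
  exact le_of_mul_le_mul_left this (by positivity)

end Counting

section BlockPositions

variable {α : Type*} (B : List (LZBlock α))

lemma blockStart_succ (i : ℕ) : blockStart B (i + 1) = blockFin B i + 1 := by
  unfold blockStart blockFin; omega

lemma one_le_blockStart (i : ℕ) : 1 ≤ blockStart B i :=
  Nat.le_add_right ..

lemma blockStart_mono : Monotone (blockStart B) :=
  monotone_nat_of_le_succ fun i => by
    simp only [blockStart, List.take_add_one, List.map_append, List.sum_append]; omega

lemma blockFin_eq {i : ℕ} (hi : i < B.length) : blockFin B i = blockStart B i + B[i].len := by
  simp only [blockFin, blockStart, List.take_add_one, List.getElem?_eq_getElem hi, List.map_append,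
    List.sum_append, Option.toList_some, List.map_cons, List.map_nil, List.sum_cons, List.sum_nil]
  omega

lemma lenAt_eq {i : ℕ} (hi : i < B.length) : lenAt B i = B[i].len := by
  rw [lenAt, blockFin_eq B hi]; omega

lemma blockFin_lt_blockStart {i k : ℕ} (h : i < k) : blockFin B i < blockStart B k := by
  have := blockStart_mono B h; rw [blockStart_succ] at this; omega

lemma blockFin_le_sum (i : ℕ) : blockFin B i ≤ (B.map fun b => b.len + 1).sum :=
  ((List.take_sublist _ B).map _).sum_le_sum fun _ _ => Nat.zero_le _

lemma sum_blockFin_add_one_sub_blockStart_le {T : Finset ℕ} (hT : T ⊆ range B.length) :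
    ∑ i ∈ T, (blockFin B i + 1 - blockStart B i) ≤ (B.map fun b => b.len + 1).sum :=
  calc ∑ i ∈ T, (blockFin B i + 1 - blockStart B i)
      = ∑ i ∈ T, (blockStart B (i + 1) - blockStart B i) := by simp only [blockStart_succ]
    _ ≤ ∑ i ∈ range B.length, (blockStart B (i + 1) - blockStart B i) := sum_le_sum_of_subset hT
    _ = _ := by rw [sum_range_tsub (blockStart_mono B)]; simp [blockStart]

lemma card_le_card_filter_not_mem_block_add_one (T : Finset ℕ) (j : ℕ) :
    #T ≤ #{i ∈ T | ¬ (blockStart B i ≤ j ∧ j ≤ blockFin B i)} + 1 := by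
  have hle : #{i ∈ T | blockStart B i ≤ j ∧ j ≤ blockFin B i} ≤ 1 := by
    refine card_le_one.2 fun a ha b hb => ?_
    simp only [mem_filter] at ha hb
    rcases lt_trichotomy a b with h | h | h
    · have := blockFin_lt_blockStart B h; omega
    · exact h
    · have := blockFin_lt_blockStart B h; omega
  have := card_filter_add_card_filter_not (s := T) fun i => blockStart B i ≤ j ∧ j ≤ blockFin B i
  omega

variable {B} {B' : List (LZBlock α)}

lemma mem_Mset {i k : ℕ} : k ∈ Mset B B' i ↔
    k < B'.length ∧ blockStart B i ≤ blockStart B' k ∧ blockStart B' k ≤ blockFin B i := by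
  simp [Mset]

lemma disjoint_Mset {a b : ℕ} (h : a ≠ b) : Disjoint (Mset B B' a) (Mset B B' b) := by
  refine disjoint_left.2 fun k ha hb => ?_
  rw [mem_Mset] at ha hb
  rcases lt_or_gt_of_ne h with h | h
  · have := blockFin_lt_blockStart B h; omega
  · have := blockFin_lt_blockStart B h; omega

lemma exists_mem_Mset_blockFin_lt {i : ℕ} (h : 1 < #(Mset B B' i)) :
    ∃ k ∈ Mset B B' i, blockFin B' k < blockFin B i := by
  obtain ⟨k₁, hk₁, k₂, hk₂, hne⟩ := one_lt_card.1 h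
  rw [mem_Mset] at hk₁ hk₂
  rcases lt_or_gt_of_ne hne with h | h
  · exact ⟨k₁, mem_Mset.2 hk₁, (blockFin_lt_blockStart B' h).trans_le hk₂.2.2⟩
  · exact ⟨k₂, mem_Mset.2 hk₂, (blockFin_lt_blockStart B' h).trans_le hk₁.2.2⟩

end BlockPositions

section Parse

variable {α : Type*} {W n : ℕ} {w w' : ℕ → α} {B B' : List (LZBlock α)}

lemma IsLZ77Parse.blockFin_le (hB : IsLZ77Parse W n w B) (i : ℕ) : blockFin B i ≤ n :=
  hB.1 ▸ blockFin_le_sum B i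

lemma IsLZ77Parse.exists_earlier_occurrence (hB : IsLZ77Parse W n w B) {i a L : ℕ}
    (hi : i < B.length) (ha : blockStart B i ≤ a) (hL : a + L < blockFin B i) :
    ∃ P, 1 ≤ P ∧ P + L < a ∧ ∀ d ≤ L, w (a + d) = w (P + d) := by
  have hfin := blockFin_eq B hi
  obtain ⟨hq, -, hqs, hcopy⟩ := (hB.2 ⟨i, hi⟩).2.2.1 (by simp; omega)
  simp only [List.get_eq_getElem] at hq hqs hcopy
  refine ⟨B[i].q + (a - blockStart B i), by omega, by omega, fun d hd => ?_⟩
  have := hcopy (a - blockStart B i + d) (by omega)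
  rw [show blockStart B i + (a - blockStart B i + d) = a + d by omega, ← add_assoc] at this
  exact this.symm

lemma IsLZ77Parse.not_forall_eq_of_lt_blockStart (hB : IsLZ77Parse n n w B) {k P : ℕ}
    (hk : k < B.length) (hfin : blockFin B k < n) (hP : 1 ≤ P)
    (hPk : P + lenAt B k < blockStart B k) :
    ¬ ∀ d ≤ lenAt B k, w (P + d) = w (blockStart B k + d) := by
  have := blockFin_eq B hk
  rw [lenAt_eq B hk] at hPk ⊢
  intro h
  refine (hB.2 ⟨k, hk⟩).2.2.2 ?_ ⟨P, hP, ?_, ?_, h⟩ <;> simp only [List.get_eq_getElem] <;> omega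

end Parse

section Neighbors

variable {α : Type*} {W n j : ℕ} {w w' : ℕ → α} {B B' : List (LZBlock α)}

lemma exists_source_of_one_lt_card_Mset (hB : IsLZ77Parse W n w B)
    (hB' : IsLZ77Parse n n w' B') (hw : ∀ i, i ≠ j → w i = w' i) {i : ℕ} (hi : i < B.length)
    (hM : 1 < #(Mset B B' i)) (hj : ¬ (blockStart B i ≤ j ∧ j ≤ blockFin B i)) :
    ∃ k ∈ Mset B B' i, blockFin B' k < blockFin B i ∧ ∃ P, (P ≤ j ∧ j ≤ P + lenAt B' k) ∧
      ∀ d ≤ lenAt B' k, w' (blockStart B' k + d) = w (P + d) := by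
  obtain ⟨k, hkM, hkf⟩ := exists_mem_Mset_blockFin_lt hM
  obtain ⟨hk, hks, -⟩ := mem_Mset.1 hkM
  have hfin := blockFin_eq B' hk
  have hlen := lenAt_eq B' hk
  have hfin_le := hB.blockFin_le i
  obtain ⟨P, hP, hPk, hcopy⟩ :=
    hB.exists_earlier_occurrence (L := lenAt B' k) hi hks (by omega)
  have hagree : ∀ d ≤ lenAt B' k, w' (blockStart B' k + d) = w (blockStart B' k + d) :=
    fun d hd => (hw _ (by omega)).symm
  refine ⟨k, hkM, hkf, P, ?_, fun d hd => (hagree d hd).trans (hcopy d hd)⟩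
  -- otherwise block `k` of `w'`, final character included, would already occur at `P`
  by_contra hjP
  refine hB'.not_forall_eq_of_lt_blockStart hk (by omega) hP hPk fun d hd => ?_
  rw [← hw _ (by omega), ← hcopy d hd, hagree d hd]

lemma exists_pairs_card_eq_sum_le (hB : IsLZ77Parse W n w B) (hB' : IsLZ77Parse n n w' B')
    (hw : ∀ i, i ≠ j → w i = w' i) {T : Finset ℕ}
    (hT : ∀ i ∈ T, i < B.length ∧ 1 < #(Mset B B' i) ∧
      ¬ (blockStart B i ≤ j ∧ j ≤ blockFin B i)) :
    ∃ S : Finset (ℕ × ℕ), #S = #T ∧ ∑ p ∈ S, (p.1 + p.2 + 2) ≤ n := by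
  choose! k hkM hkf P hPj hcopy using fun i hi =>
    exists_source_of_one_lt_card_Mset hB hB' hw (hT i hi).1 (hT i hi).2.1 (hT i hi).2.2
  have hk i (hi : i ∈ T) := mem_Mset.1 (hkM i hi)
  have hkfin i (hi : i ∈ T) := blockFin_eq B' (hk i hi).1
  have hklen i (hi : i ∈ T) := lenAt_eq B' (hk i hi).1
  -- equal pairs give two blocks of `w'` with the same content, both copied from the same `P`:
  -- then the later one already occurs at the earlier one
  have hinj : Set.InjOn (fun i => (j - P i, P i + lenAt B' (k i) - j)) T := by
    have key : ∀ a ∈ T, ∀ b ∈ T, k a < k b → P a = P b → lenAt B' (k a) = lenAt B' (k b) →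
        False := fun a ha b hb hlt hP hL => by
      have := hk a ha; have := hk b hb; have := hkfin a ha; have := hkfin b hb
      have := hklen a ha; have := hklen b hb; have := blockFin_lt_blockStart B' hlt
      refine hB'.not_forall_eq_of_lt_blockStart (P := blockStart B' (k a)) (hk b hb).1
        ((hkf b hb).trans_le (hB.blockFin_le b)) (one_le_blockStart ..) (by omega) fun d hd => ?_
      rw [hcopy a ha d (by omega), hcopy b hb d hd, hP]
    intro a ha b hb hab
    simp only [Prod.mk.injEq] at hab
    have := hPj a ha; have := hPj b hb
    by_contra hne
    have hkne : k a ≠ k b := fun h =>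
      disjoint_left.1 (disjoint_Mset hne) (hkM a ha) (h ▸ hkM b hb)
    rcases lt_or_gt_of_ne hkne with h | h
    · exact key a ha b hb h (by omega) (by omega)
    · exact key b hb a ha h (by omega) (by omega)
  refine ⟨T.image _, card_image_of_injOn hinj, ?_⟩
  rw [sum_image hinj]
  calc ∑ i ∈ T, (j - P i + (P i + lenAt B' (k i) - j) + 2)
      ≤ ∑ i ∈ T, (blockFin B i + 1 - blockStart B i) := sum_le_sum fun i hi => by
        have := hk i hi; have := hkfin i hi; have := hklen i hi
        have := hPj i hi; have := hkf i hi
        omega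
    _ ≤ (B.map fun b => b.len + 1).sum :=
        sum_blockFin_add_one_sub_blockStart_le B fun i hi => mem_range.2 (hT i hi).1
    _ = n := hB.1

end Neighbors

/-- Lemma: bound on the number of type-2 blocks, `W = n`.
For neighboring strings `w ∼ w' ∈ Σⁿ` compressed by LZ77 with unbounded window,
the number of type-2 blocks satisfies
`t₂ ≤ (∛9/2)·n^(2/3) + (∛3/2)·n^(1/3) + 1`. -/
theorem lz77_typeTwo_count_bound {α : Type*} (n : ℕ) (w w' : ℕ → α)
    (hnb : Neighbor n w w')
    (B B' : List (LZBlock α))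
    (hB : IsLZ77Parse n n w B) (hB' : IsLZ77Parse n n w' B') :
    (((typeSet B B' 2).card : ℝ)) ≤
      (9 : ℝ) ^ ((1 : ℝ) / 3) / 2 * (n : ℝ) ^ ((2 : ℝ) / 3)
        + (3 : ℝ) ^ ((1 : ℝ) / 3) / 2 * (n : ℝ) ^ ((1 : ℝ) / 3) + 1 := by
  obtain ⟨j, -, -, -, hw⟩ := hnb
  set T := {i ∈ typeSet B B' 2 | ¬ (blockStart B i ≤ j ∧ j ≤ blockFin B i)}
  have hT : ∀ i ∈ T, i < B.length ∧ 1 < #(Mset B B' i) ∧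
      ¬ (blockStart B i ≤ j ∧ j ≤ blockFin B i) := fun i hi => by
    simp only [T, typeSet, mem_filter, mem_range] at hi
    exact ⟨hi.1.1, by omega, hi.2⟩
  obtain ⟨S, hST, hSn⟩ := exists_pairs_card_eq_sum_le hB hB' hw hT
  have hsplit := card_le_card_filter_not_mem_block_add_one B (typeSet B B' 2) j
  set x : ℝ := (3 * n) ^ ((1 : ℝ) / 3)
  have hx : 0 ≤ x := by positivity
  have hx3 : x ^ 3 = 3 * n := by
    simp only [x, one_div]
    exact_mod_cast Real.rpow_inv_natCast_pow (n := 3) (by positivity) (by norm_num)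
  have hx2 : x ^ 2 = (9 : ℝ) ^ ((1 : ℝ) / 3) * (n : ℝ) ^ ((2 : ℝ) / 3) := by
    rw [show (9 : ℝ) = 3 ^ 2 by norm_num, ← Real.rpow_natCast, ← Real.rpow_natCast,
      ← Real.rpow_mul (by norm_num), ← Real.rpow_mul (by positivity),
      Real.mul_rpow (by norm_num) (by positivity)]
    norm_num
  have hS := card_le_sq_div_two_of_sum_le hSn hx (by exact_mod_cast hx3.ge)
  have : (0 : ℝ) ≤ (3 : ℝ) ^ ((1 : ℝ) / 3) / 2 * (n : ℝ) ^ ((1 : ℝ) / 3) := by positivity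
  calc (#(typeSet B B' 2) : ℝ) ≤ #S + 1 := by rw [hST]; exact_mod_cast hsplit
    _ ≤ x ^ 2 / 2 + 1 := by linarith
    _ ≤ _ := by rw [hx2]; linarith
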